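/- arXiv:2605.13304 — 3 statements merged into one kernel-verified Lean document; each statement's English description precedes it below -/
import Mathlib

section
/- Let (A,B) ∈ D with m ≥ 2 and intersection indices as defined, and let r ∈ {1,…,m−1} be such that i_{r+1} − i_r = 1 and j_{r+1} − j_r > 1. Then u⁻¹(b_{j_{r+1}−1}) > u⁻¹(b_{j_{r+1}}) and b_{j_r+1} < a_{i_r+1}. -/
/-!
Common setup: the symmetric group `S_n` (`n ≥ 2`) is modeled as `Equiv.Perm (Fin (n+2))`
(so every `n ≥ 2` is of the form `n+2` with `n : ℕ`).  The element `1` of `{1,…,n}` is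
`0 : Fin (n+2)` and the element `n` is `Fin.last (n+1)`.
Composition of permutations is multiplication: `(C * C') x = C (C' x)`.
-/

open Equiv

namespace DblShortcut

variable {n : ℕ}

/-- The cycle `(n, a_k, …, a_1)` determined by the sequence `a_1, …, a_k`
(as `a : Fin k → Fin (n+2)`); when `k = 0` this is the identity. -/
def cycA {k : ℕ} (a : Fin k → Fin (n+2)) : Equiv.Perm (Fin (n+2)) :=
  (Fin.last (n+1) :: (List.ofFn a).reverse).formPerm

/-- The cycle `(x, b_1, …, b_h)` determined by the base point `x` and the sequence
`b_1, …, b_h`; when `h = 0` this is the identity. -/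
def cycB {h : ℕ} (x : Fin (n+2)) (b : Fin h → Fin (n+2)) : Equiv.Perm (Fin (n+2)) :=
  (x :: List.ofFn b).formPerm

/-- The length of the defining index sequence of a cycle as above:
`|support| - 1` (which is `0` for the identity, and `k` for `cycA a`, `h` for `cycB x b`). -/
def clen (C : Equiv.Perm (Fin (n+2))) : ℕ := C.support.card - 1

/-- The sequence `a_1, …, a_k` extended by `a_{k+1} := n`. -/
def asnoc {k : ℕ} (a : Fin k → Fin (n+2)) : Fin (k+1) → Fin (n+2) :=
  Fin.snoc a (Fin.last (n+1))

/-- The sequence `b_1, …, b_h` prefixed by the base point `x` (`b_0 := x`). -/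
def bcons {h : ℕ} (x : Fin (n+2)) (b : Fin h → Fin (n+2)) : Fin (h+1) → Fin (n+2) :=
  Fin.cons x b

/-- `a_t`, with the conventions `a_0 := n` and `a_{k+1} := n` (out-of-range values are `n`). -/
def aext {k : ℕ} (a : Fin k → Fin (n+2)) (t : ℕ) : Fin (n+2) :=
  if ht : 1 ≤ t ∧ t ≤ k then a ⟨t - 1, by omega⟩ else Fin.last (n+1)

/-- `b_t`, with the conventions `b_0 := 1` and `b_{h+1} := 1` (out-of-range values are `1`). -/
def bext {h : ℕ} (b : Fin h → Fin (n+2)) (t : ℕ) : Fin (n+2) :=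
  if ht : 1 ≤ t ∧ t ≤ h then b ⟨t - 1, by omega⟩ else 0

/-- Conditions (1) and (2) of the definition of `D` on the sequence `a_1 < … < a_k`:
`1 ≤ a_1 < … < a_k < n` and `v⁻¹(n) = u⁻¹(a_1) < u⁻¹(a_2) < … < u⁻¹(a_k) < u⁻¹(n)`
(with `v⁻¹(n) = u⁻¹(n)` when `k = 0`). -/
def DCondA (u v : Perm (Fin (n+2))) {k : ℕ} (a : Fin k → Fin (n+2)) : Prop :=
  StrictMono a ∧ (∀ i, a i < Fin.last (n+1)) ∧
  v.symm (Fin.last (n+1)) = u.symm (asnoc a 0) ∧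
  StrictMono fun i : Fin (k+1) => u.symm (asnoc a i)

/-- Conditions (3) and (4) of the definition of `D` on the sequence `b_1 < … < b_h`:
`1 < b_1 < … < b_h < n` and
`u⁻¹(A⁻¹(1)) < u⁻¹(A⁻¹(b_1)) < … < u⁻¹(A⁻¹(b_h)) = v⁻¹(1)`
(with `u⁻¹(A⁻¹(1)) = v⁻¹(1)` when `h = 0`). -/
def DCondB (u v A : Perm (Fin (n+2))) {h : ℕ} (b : Fin h → Fin (n+2)) : Prop :=
  StrictMono b ∧ (∀ i, 0 < b i ∧ b i < Fin.last (n+1)) ∧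
  (StrictMono fun i : Fin (h+1) => u.symm (A.symm (bcons 0 b i))) ∧
  u.symm (A.symm (bcons 0 b (Fin.last h))) = v.symm 0

/-- The set `D`: pairs `(A,B)` with `A = (n,a_k,…,a_1)`, `B = (1,b_1,…,b_h)`
satisfying conditions (1)–(4). -/
def memD (u v A B : Perm (Fin (n+2))) : Prop :=
  ∃ (k h : ℕ) (a : Fin k → Fin (n+2)) (b : Fin h → Fin (n+2)),
    A = cycA a ∧ B = cycB 0 b ∧ DCondA u v a ∧ DCondB u v A b

/-- Conditions (a) and (b) of the definition of `D̄` on the sequence `b̄_1 < … < b̄_h̄`: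
`1 < b̄_1 < … < b̄_h̄ ≤ n` and `u⁻¹(1) < u⁻¹(b̄_1) < … < u⁻¹(b̄_h̄) = v⁻¹(1)`
(with `u⁻¹(1) = v⁻¹(1)` when `h̄ = 0`). -/
def DbarCondB (u v : Perm (Fin (n+2))) {h : ℕ} (b : Fin h → Fin (n+2)) : Prop :=
  StrictMono b ∧ (∀ i, 0 < b i) ∧
  (StrictMono fun i : Fin (h+1) => u.symm (bcons 0 b i)) ∧
  u.symm (bcons 0 b (Fin.last h)) = v.symm 0

/-- Conditions (c) and (d) of the definition of `D̄` on the sequence `ā_1 < … < ā_k̄`: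
`1 ≤ ā_1 < … < ā_k̄ < n` and
`v⁻¹(n) = u⁻¹(B̄⁻¹(ā_1)) < … < u⁻¹(B̄⁻¹(ā_k̄)) < u⁻¹(B̄⁻¹(n))`
(with `v⁻¹(n) = u⁻¹(B̄⁻¹(n))` when `k̄ = 0`). -/
def DbarCondA (u v Bbar : Perm (Fin (n+2))) {k : ℕ} (a : Fin k → Fin (n+2)) : Prop :=
  StrictMono a ∧ (∀ i, a i < Fin.last (n+1)) ∧
  v.symm (Fin.last (n+1)) = u.symm (Bbar.symm (asnoc a 0)) ∧
  StrictMono fun i : Fin (k+1) => u.symm (Bbar.symm (asnoc a i))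

/-- The set `D̄`: pairs `(B̄,Ā)` with `B̄ = (1,b̄_1,…,b̄_h̄)`, `Ā = (n,ā_k̄,…,ā_1)`
satisfying conditions (a)–(d). -/
def memDbar (u v Bbar Abar : Perm (Fin (n+2))) : Prop :=
  ∃ (h k : ℕ) (b : Fin h → Fin (n+2)) (a : Fin k → Fin (n+2)),
    Bbar = cycB 0 b ∧ Abar = cycA a ∧ DbarCondB u v b ∧ DbarCondA u v Bbar a

end DblShortcut

namespace DblShortcut

/-- Intersection data for `(A,B) ∈ D` with `m := |A_s ∩ B_s|`:
`A_s ∩ B_s = {c_1 < … < c_m}` and `c_l = a_{i_l} = b_{j_l}` with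
`i_1 < … < i_m` in `{1,…,k}` and `j_1 < … < j_m` in `{0,1,…,h}`
(conventions `a_0 := n`, `b_0 := 1`, `a_{k+1} := n`, `b_{h+1} := 1`). -/
def InterD {n k h : ℕ} (a : Fin k → Fin (n+2)) (b : Fin h → Fin (n+2))
    {m : ℕ} (i j : Fin m → ℕ) : Prop :=
  StrictMono i ∧ StrictMono j ∧
  (∀ l, 1 ≤ i l ∧ i l ≤ k) ∧ (∀ l, j l ≤ h) ∧
  (∀ l, aext a (i l) = bext b (j l)) ∧
  (cycA a).support ∩ (cycB 0 b).support
    = Finset.image (fun l => aext a (i l)) Finset.univ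

/-- Intersection data for `(B̄,Ā) ∈ D̄` with `m := |Ā_s ∩ B̄_s|`:
`Ā_s ∩ B̄_s = {c̄_1 < … < c̄_m}` and `c̄_l = ā_{i_l} = b̄_{j_l}` with
`i_1 < … < i_m` in `{1,…,k̄+1}` and `j_1 < … < j_m` in `{1,…,h̄}`
(conventions `ā_0 := n`, `b̄_0 := 1`, `ā_{k̄+1} := n`, `b̄_{h̄+1} := 1`). -/
def InterDbar {n h k : ℕ} (b : Fin h → Fin (n+2)) (a : Fin k → Fin (n+2))
    {m : ℕ} (i j : Fin m → ℕ) : Prop :=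
  StrictMono i ∧ StrictMono j ∧
  (∀ l, 1 ≤ i l ∧ i l ≤ k + 1) ∧ (∀ l, 1 ≤ j l ∧ j l ≤ h) ∧
  (∀ l, aext a (i l) = bext b (j l)) ∧
  (cycA a).support ∩ (cycB 0 b).support
    = Finset.image (fun l => aext a (i l)) Finset.univ

/-- Hypothesis (∗) (resp. (∗∗)): consecutive intersection indices differ by `1`,
i.e. `i_{r+1} − i_r = 1` and `j_{r+1} − j_r = 1` for all `r ∈ {1,…,m−1}`. -/
def StarHyp {m : ℕ} (i j : Fin m → ℕ) : Prop :=
  ∀ l : Fin m, ∀ hl : l.1 + 1 < m,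
    i ⟨l.1 + 1, hl⟩ = i l + 1 ∧ j ⟨l.1 + 1, hl⟩ = j l + 1

end DblShortcut

namespace DblShortcut


section Helpers

variable {n k h : ℕ}

lemma nodupA (a : Fin k → Fin (n+2)) (ha : Function.Injective a)
    (ha' : ∀ i, a i < Fin.last (n+1)) :
    (Fin.last (n+1) :: (List.ofFn a).reverse).Nodup := by
  refine List.nodup_cons.mpr ⟨?_, ?_⟩
  · simp only [List.mem_reverse, List.mem_ofFn]
    rintro ⟨i, hi⟩
    exact (ha' i).ne hi
  · rw [List.nodup_reverse]
    exact List.nodup_ofFn.mpr ha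

lemma aext_getElem (a : Fin k → Fin (n+2)) (s : ℕ) (hs : s < k + 1) :
    (Fin.last (n+1) :: (List.ofFn a).reverse)[s]'(by simpa using hs)
      = aext a (k + 1 - s) := by
  rcases s with _ | s
  · simp [aext]
  · have hs' : s < k := by omega
    have h1 : (Fin.last (n+1) :: (List.ofFn a).reverse)[s+1]'(by simpa using hs)
        = ((List.ofFn a).reverse)[s]'(by simpa using hs') := rfl
    rw [h1, List.getElem_reverse, List.getElem_ofFn]
    rw [aext, dif_pos (by omega)]
    congr 1
    ext
    simp
    omega

lemma cycA_apply_aext (a : Fin k → Fin (n+2)) (ha : Function.Injective a)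
    (ha' : ∀ i, a i < Fin.last (n+1)) (t : ℕ) (ht : t ≤ k) :
    cycA a (aext a (t + 1)) = aext a t := by
  have hnd := nodupA a ha ha'
  have hlen : (Fin.last (n+1) :: (List.ofFn a).reverse).length = k + 1 := by simp
  have hkt : k - t < k + 1 := by omega
  have h1 : aext a (t + 1) = (Fin.last (n+1) :: (List.ofFn a).reverse)[k-t]'(by omega) := by
    rw [aext_getElem a (k-t) hkt]
    congr 1
    omega
  rw [cycA, h1, List.formPerm_apply_getElem _ hnd]
  simp only [hlen]
  rcases Nat.eq_zero_or_pos t with rfl | htpos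
  · have : (k - 0 + 1) % (k + 1) = 0 := by simp [Nat.sub_zero]
    rw [aext_getElem a _ (by omega)]
    rw [this]
    simp [aext]
  · have hmod : (k - t + 1) % (k + 1) = k - t + 1 := Nat.mod_eq_of_lt (by omega)
    rw [aext_getElem a _ (by rw [hmod]; omega)]
    congr 1
    rw [hmod]
    omega

lemma cycA_symm_aext (a : Fin k → Fin (n+2)) (ha : Function.Injective a)
    (ha' : ∀ i, a i < Fin.last (n+1)) (t : ℕ) (ht : t ≤ k) :
    (cycA a).symm (aext a t) = aext a (t + 1) := by
  rw [Equiv.symm_apply_eq, cycA_apply_aext a ha ha' t ht]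

lemma bcons_eq_bext (b : Fin h → Fin (n+2)) (t : ℕ) (ht : t ≤ h) :
    bcons (0 : Fin (n+2)) b ⟨t, by omega⟩ = bext b t := by
  rcases t with _ | t
  · simp [bcons, bext]
  · have h1 : (⟨t+1, by omega⟩ : Fin (h+1)) = Fin.succ ⟨t, by omega⟩ := rfl
    rw [bcons, h1, Fin.cons_succ, bext, dif_pos (by omega)]
    congr 1

lemma bext_pos (b : Fin h → Fin (n+2)) (hb : ∀ i, 0 < b i ∧ b i < Fin.last (n+1))
    (t : ℕ) (ht1 : 1 ≤ t) (ht2 : t ≤ h) : 0 < bext b t := by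
  rw [bext, dif_pos ⟨ht1, ht2⟩]
  exact (hb _).1

lemma mem_cycB_support (b : Fin h → Fin (n+2)) (t : ℕ) (ht1 : 1 ≤ t) (ht2 : t ≤ h)
    (hb : ∀ i, 0 < b i ∧ b i < Fin.last (n+1)) (hbm : Function.Injective b) :
    bext b t ∈ (cycB 0 b).support := by
  rw [cycB, List.support_formPerm_of_nodup]
  · rw [List.mem_toFinset, bext, dif_pos ⟨ht1, ht2⟩]
    simp only [List.mem_cons, List.mem_ofFn]
    exact Or.inr ⟨_, rfl⟩
  · refine List.nodup_cons.mpr ⟨?_, List.nodup_ofFn.mpr hbm⟩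
    simp only [List.mem_ofFn]
    rintro ⟨i, hi⟩
    exact (hb i).1.ne' hi
  · intro x hx
    have : h = 0 := by
      have := congrArg List.length hx
      simpa using this
    omega

end Helpers

/-- Let `(A,B) ∈ D` with `m ≥ 2`, and let `r ∈ {1,…,m−1}` be such that
`i_{r+1} − i_r = 1` and `j_{r+1} − j_r > 1`.  Then `u⁻¹(b_{j_{r+1}−1}) > u⁻¹(b_{j_{r+1}})`
and `b_{j_r+1} < a_{i_r+1}`. -/
theorem statement15 (n : ℕ) (u v : Equiv.Perm (Fin (n+2))) (k h : ℕ)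
    (a : Fin k → Fin (n+2)) (b : Fin h → Fin (n+2))
    (hA : DCondA u v a) (hB : DCondB u v (cycA a) b)
    (m : ℕ) (hm : 2 ≤ m) (i j : Fin m → ℕ)
    (hinter : InterD a b i j)
    (r : Fin m) (hr : r.1 + 1 < m)
    (hi : i ⟨r.1 + 1, hr⟩ = i r + 1)
    (hj : j r + 1 < j ⟨r.1 + 1, hr⟩) :
    u.symm (bext b (j ⟨r.1 + 1, hr⟩)) < u.symm (bext b (j ⟨r.1 + 1, hr⟩ - 1)) ∧
    bext b (j r + 1) < aext a (i r + 1) := by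
  obtain ⟨hamono, halt, -, -⟩ := hA
  obtain ⟨hbmono, hbrange, hBmono, -⟩ := hB
  obtain ⟨himono, hjmono, hik, hjh, hab, hsupp⟩ := hinter
  set r1 : Fin m := ⟨r.1 + 1, hr⟩ with hr1
  have hrlt : r < r1 := by simp [hr1, Fin.lt_def]
  have hjr1h : j r1 ≤ h := hjh r1
  set q : ℕ := j r1 - 1 with hq
  have hq1 : 1 ≤ q := by omega
  have hqh : q ≤ h := by omega
  have hjrq : j r < q := by omega
  have e1 : aext a (i r + 1) = bext b (j r1) := by rw [← hi]; exact hab r1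
  refine ⟨?_, ?_⟩
  · have hnot : bext b q ∉ (cycA a).support := by
      intro hmem
      have hmemB : bext b q ∈ (cycB 0 b).support :=
        mem_cycB_support b q hq1 hqh hbrange hbmono.injective
      have hx : bext b q ∈ Finset.image (fun l => aext a (i l)) Finset.univ := by
        rw [← hsupp]; exact Finset.mem_inter.mpr ⟨hmem, hmemB⟩
      obtain ⟨l, -, hl⟩ := Finset.mem_image.mp hx
      rw [hab l] at hl
      by_cases hjl : 1 ≤ j l
      · have hlq : j l = q := by
          rw [bext, dif_pos ⟨hjl, hjh l⟩, bext, dif_pos ⟨hq1, hqh⟩] at hl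
          have h2 := congrArg Fin.val (hbmono.injective hl)
          simp only at h2
          omega
        rcases le_or_gt l r with hlr | hlr
        · have : j l ≤ j r := hjmono.monotone hlr
          omega
        · have : j r1 ≤ j l := hjmono.monotone (by
            rw [Fin.le_def]
            exact hlr)
          omega
      · have h0 : j l = 0 := by omega
        rw [h0, bext, dif_neg (by omega)] at hl
        exact absurd hl.symm (bext_pos b hbrange q hq1 hqh).ne'
    have hfix : (cycA a).symm (bext b q) = bext b q := by
      have hnot' : bext b q ∉ ((cycA a)⁻¹).support := by
        rwa [Equiv.Perm.support_inv]
      simpa [Equiv.Perm.inv_def] using Equiv.Perm.notMem_support.mp hnot'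
    have key := hBmono (show (⟨j r, by omega⟩ : Fin (h+1)) < ⟨q, by omega⟩ from by
      rw [Fin.lt_def]; exact hjrq)
    simp only at key
    rw [bcons_eq_bext b (j r) (by omega), bcons_eq_bext b q hqh, hfix] at key
    have e2 : (cycA a).symm (bext b (j r)) = bext b (j r1) := by
      rw [← hab r, cycA_symm_aext a hamono.injective halt (i r) (hik r).2]; exact e1
    rw [e2] at key
    exact key
  · rw [e1, bext, dif_pos ⟨by omega, by omega⟩, bext, dif_pos ⟨by omega, by omega⟩]
    apply hbmono
    rw [Fin.lt_def]
    simp only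
    omega

end DblShortcut
end

section
/- Let A = (n,a_k,…,a_1) (k ≥ 0, A = id when k = 0) and B = (1,b_1,…,b_h) (h ≥ 1) be cycles in S_n satisfying conditions (1), (2) and (4) of the definition of D together with 1 < b_1 < b_2 < … < b_h ≤ n. Then b_h < n, i.e. n is not moved by B. -/
/-!
Common setup: the symmetric group `S_n` (`n ≥ 2`) is modeled as `Equiv.Perm (Fin (n+2))`
(so every `n ≥ 2` is of the form `n+2` with `n : ℕ`).  The element `1` of `{1,…,n}` is
`0 : Fin (n+2)` and the element `n` is `Fin.last (n+1)`.
Composition of permutations is multiplication: `(C * C') x = C (C' x)`.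
-/

open Equiv

namespace DblShortcut


lemma getLast_reverse' {α : Type*} (l : List α) (hne : l.reverse ≠ []) :
    l.reverse.getLast hne = l.head (by simpa using hne) := by
  induction l with
  | nil => simp at hne
  | cons x xs ih => simp [List.getLast_concat]

lemma symm_cycA_last {n k : ℕ} (a : Fin k → Fin (n+2)) :
    (cycA a).symm (Fin.last (n+1)) = asnoc a 0 := by
  have key : (cycA a) ((Fin.last (n+1) :: (List.ofFn a).reverse).getLast (by simp))
      = Fin.last (n+1) := List.formPerm_apply_getLast _ _
  have hg : ((Fin.last (n+1) :: (List.ofFn a).reverse).getLast (by simp)) = asnoc a 0 := by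
    cases k with
    | zero =>
      simp only [List.ofFn_zero, List.reverse_nil]
      simp [asnoc]
      rfl
    | succ m =>
      have hne : (List.ofFn a).reverse ≠ [] := by simp
      rw [List.getLast_cons hne]
      rw [getLast_reverse']
      have : (List.ofFn a).head (by simp) = a 0 := by
        simp [List.ofFn_succ]
      rw [this]
      have h0 : (0 : Fin (m+2)) = Fin.castSucc 0 := rfl
      rw [asnoc, h0, Fin.snoc_castSucc]
  rw [← hg]
  exact (Equiv.symm_apply_eq _).mpr key.symm

/-- Let `A = (n,a_k,…,a_1)` and `B = (1,b_1,…,b_h)` (`h ≥ 1`) satisfy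
conditions (1), (2) and (4) of the definition of `D` together with
`1 < b_1 < … < b_h ≤ n`.  Then `b_h < n`, i.e. `n` is not moved by `B`. -/
theorem statement18 (n : ℕ) (u v : Equiv.Perm (Fin (n+2))) (k h : ℕ) (hh : 1 ≤ h)
    (a : Fin k → Fin (n+2)) (b : Fin h → Fin (n+2))
    (hA : DCondA u v a)
    (hb1 : StrictMono b) (hb2 : ∀ i, 0 < b i)
    (hb3 : StrictMono fun i : Fin (h+1) => u.symm ((cycA a).symm (bcons 0 b i)))
    (hb4 : u.symm ((cycA a).symm (bcons 0 b (Fin.last h))) = v.symm 0) :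
    b ⟨h - 1, by omega⟩ < Fin.last (n+1) ∧ Fin.last (n+1) ∉ (cycB 0 b).support := by
  obtain ⟨m, rfl⟩ : ∃ m, h = m + 1 := ⟨h - 1, by omega⟩
  have hlast : bcons (0 : Fin (n+2)) b (Fin.last (m+1)) = b (Fin.last m) := by
    have : Fin.last (m+1) = Fin.succ (Fin.last m) := rfl
    rw [this, bcons, Fin.cons_succ]
  have hbm : b (Fin.last m) < Fin.last (n+1) := by
    rcases lt_or_eq_of_le (Fin.le_last (b (Fin.last m))) with hlt | heq
    · exact hlt
    · exfalso
      have h4 : u.symm ((cycA a).symm (Fin.last (n+1))) = v.symm 0 := by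
        rw [← heq, ← hlast]; exact hb4
      rw [symm_cycA_last] at h4
      have := hA.2.2.1.trans h4
      have h01 : (Fin.last (n+1) : Fin (n+2)) = 0 := v.symm.injective this
      exact absurd h01 (Fin.last_pos).ne'
  have hidx : (⟨m + 1 - 1, by omega⟩ : Fin (m+1)) = Fin.last m := rfl
  refine ⟨by rw [hidx]; exact hbm, ?_⟩
  rw [Equiv.Perm.notMem_support]
  apply List.formPerm_apply_of_notMem
  simp only [List.mem_cons, List.mem_ofFn, Set.mem_range, not_or]
  constructor
  · exact (Fin.last_pos).ne'
  · rintro ⟨i, hi⟩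
    exact absurd hi (lt_of_le_of_lt (hb1.monotone (Fin.le_last i)) hbm).ne

end DblShortcut
end

section
/- Let B̄ = (1,b̄_1,…,b̄_h̄) (h̄ ≥ 0, B̄ = id when h̄ = 0) and Ā = (n,ā_k̄,…,ā_1) (k̄ ≥ 1) be cycles in S_n satisfying conditions (a), (b) and (d) of the definition of D̄ together with 1 ≤ ā_1 < ā_2 < … < ā_k̄ < n. Then ā_1 > 1, i.e. 1 is not moved by Ā. -/
/-!
Common setup: the symmetric group `S_n` (`n ≥ 2`) is modeled as `Equiv.Perm (Fin (n+2))`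
(so every `n ≥ 2` is of the form `n+2` with `n : ℕ`).  The element `1` of `{1,…,n}` is
`0 : Fin (n+2)` and the element `n` is `Fin.last (n+1)`.
Composition of permutations is multiplication: `(C * C') x = C (C' x)`.
-/

open Equiv

namespace DblShortcut

/-- Let `B̄ = (1,b̄_1,…,b̄_h̄)` and `Ā = (n,ā_k̄,…,ā_1)` (`k̄ ≥ 1`)
satisfy conditions (a), (b) and (d) of the definition of `D̄` together with
`1 ≤ ā_1 < … < ā_k̄ < n`.  Then `ā_1 > 1`, i.e. `1` is not moved by `Ā`. -/
theorem statement19 (n : ℕ) (u v : Equiv.Perm (Fin (n+2))) (h k : ℕ) (hk : 1 ≤ k)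
    (b : Fin h → Fin (n+2)) (a : Fin k → Fin (n+2))
    (hB : DbarCondB u v b)
    (ha1 : StrictMono a) (ha2 : ∀ i, a i < Fin.last (n+1))
    (ha3 : v.symm (Fin.last (n+1)) = u.symm ((cycB 0 b).symm (asnoc a 0)))
    (ha4 : StrictMono fun i : Fin (k+1) => u.symm ((cycB 0 b).symm (asnoc a i))) :
    0 < a ⟨0, hk⟩ ∧ (0 : Fin (n+2)) ∉ (cycA a).support := by
  have hBsymm : (cycB 0 b).symm 0 = bcons 0 b (Fin.last h) := by
    rw [Equiv.symm_apply_eq, cycB]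
    have key : bcons 0 b (Fin.last h)
        = ((0:Fin (n+2)) :: List.ofFn b).getLast (List.cons_ne_nil _ _) := by
      cases h with
      | zero => simp [bcons]
      | succ h' =>
        have hne : List.ofFn b ≠ [] := by simp
        rw [List.getLast_cons hne, List.getLast_ofFn_succ]
        simp [bcons, ← Fin.succ_last]
    rw [key]
    exact (List.formPerm_apply_getLast _ _).symm
  have ha0 : 0 < a ⟨0, hk⟩ := by
    by_contra hc
    have h0 : a ⟨0, hk⟩ = 0 := le_antisymm (not_lt.mp hc) (Fin.zero_le _)
    have hz : (0 : Fin (k+1)) = Fin.castSucc ⟨0, hk⟩ := by ext; simp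
    have hsnoc : asnoc a (0 : Fin (k+1)) = a ⟨0, hk⟩ := by
      rw [asnoc, hz, Fin.snoc_castSucc]
    rw [hsnoc, h0, hBsymm, hB.2.2.2] at ha3
    have := v.symm.injective ha3
    exact absurd this (Fin.last_pos).ne'
  refine ⟨ha0, ?_⟩
  rw [Equiv.Perm.notMem_support, cycA]
  apply List.formPerm_apply_of_notMem
  intro hmem
  rcases List.mem_cons.mp hmem with h1 | h2
  · exact absurd h1.symm Fin.last_pos.ne'
  · rw [List.mem_reverse, List.mem_ofFn] at h2
    obtain ⟨i, hi⟩ := h2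
    have hle : a ⟨0, hk⟩ ≤ a i := ha1.monotone (by simp [Fin.le_def])
    rw [hi] at hle
    exact absurd (lt_of_lt_of_le ha0 hle) (lt_irrefl 0)

end DblShortcut
end
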